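/- arXiv:2107.00491 — 6 statements merged into one kernel-verified Lean document; each statement's English description precedes it below -/
import Mathlib

section
/- Let G be a group and K a subgroup such that every element x of K has at most i conjugates in G, and |K| ≤ j. Then the normal closure of K in G is finite, of order bounded by a function of i and j. -/
/-- Extraction lemma: all occurrences of `a` in a product over a conjugation-closed
set `A` can be moved to the front. -/
lemma stmt0_extract {G : Type} [Group G] [DecidableEq G] (A : Set G)
    (hconj : ∀ (g a : G), a ∈ A → g * a * g⁻¹ ∈ A) (a : G) :
    ∀ l : List G, (∀ x ∈ l, x ∈ A) →
      ∃ l₂ : List G, (∀ x ∈ l₂, x ∈ A) ∧ a ∉ l₂ ∧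
        l₂.length + l.count a = l.length ∧ a ^ l.count a * l₂.prod = l.prod := by
  intro l
  induction l with
  | nil => exact fun _ => ⟨[], by simp, by simp, by simp, by simp⟩
  | cons b t ih =>
    intro h
    obtain ⟨l₂, h1, h2, h3, h4⟩ := ih fun x hx => h x (List.mem_cons_of_mem _ hx)
    by_cases hb : b = a
    · subst hb
      refine ⟨l₂, h1, h2, ?_, ?_⟩
      · simp only [List.count_cons_self, List.length_cons]; omega
      · rw [List.count_cons_self, List.prod_cons, pow_succ', mul_assoc, h4]
    · set k := t.count a with hk
      have hb' : (a ^ k)⁻¹ * b * ((a ^ k)⁻¹)⁻¹ ∈ A :=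
        hconj _ _ (h b List.mem_cons_self)
      rw [inv_inv] at hb'
      refine ⟨((a ^ k)⁻¹ * b * a ^ k) :: l₂, ?_, ?_, ?_, ?_⟩
      · intro x hx
        rcases List.mem_cons.1 hx with rfl | hx
        · exact hb'
        · exact h1 x hx
      · intro hmem
        rcases List.mem_cons.1 hmem with heq | hmem
        · apply hb
          have : b = a ^ k * ((a ^ k)⁻¹ * b * a ^ k) * (a ^ k)⁻¹ := by group
          rw [this, heq.symm]; group
        · exact h2 hmem
      · have hba : a ≠ b := fun h => hb h.symm
        have hcount : (b :: t).count a = k := by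
          simp [List.count_cons, hba, hb, hk]
        simp only [List.length_cons, hcount]
        omega
      · have hba : a ≠ b := fun h => hb h.symm
        have hcount : (b :: t).count a = k := by
          simp [List.count_cons, hba, hb, hk]
        rw [hcount, List.prod_cons, List.prod_cons, ← h4]
        group

/-- Shortening lemma: a product over a finite conjugation-closed set `A` of elements
of order at most `j` equals a product of length at most `A.ncard * j`. -/
lemma stmt0_shorten {G : Type} [Group G] [DecidableEq G] (A : Set G) (hA : A.Finite)
    (hconj : ∀ (g a : G), a ∈ A → g * a * g⁻¹ ∈ A) (j : ℕ)
    (hord : ∀ a ∈ A, 0 < orderOf a ∧ orderOf a ≤ j) :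
    ∀ (n : ℕ) (l : List G), l.length ≤ n → (∀ x ∈ l, x ∈ A) →
      ∃ l' : List G, (∀ x ∈ l', x ∈ A) ∧ l'.length ≤ A.ncard * j ∧ l'.prod = l.prod := by
  intro n
  induction n with
  | zero =>
    intro l hl hmem
    exact ⟨l, hmem, by omega, rfl⟩
  | succ n ih =>
    intro l hl hmem
    by_cases hshort : l.length ≤ A.ncard * j
    · exact ⟨l, hmem, hshort, rfl⟩
    push_neg at hshort
    -- pigeonhole: some element has count > j
    have hex : ∃ a ∈ l, j < l.count a := by
      by_contra hcon
      push_neg at hcon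
      have hsub : l.toFinset ⊆ hA.toFinset := by
        intro x hx
        rw [Set.Finite.mem_toFinset]
        exact hmem x (List.mem_toFinset.1 hx)
      have hsum : ∑ a ∈ l.toFinset, l.count a = l.length := by
        simpa using Multiset.toFinset_sum_count_eq (l : Multiset G)
      have hle : ∑ a ∈ l.toFinset, l.count a ≤ l.toFinset.card * j := by
        calc ∑ a ∈ l.toFinset, l.count a ≤ ∑ _a ∈ l.toFinset, j :=
              Finset.sum_le_sum fun a ha => hcon a (List.mem_toFinset.1 ha)
          _ = l.toFinset.card * j := by rw [Finset.sum_const, smul_eq_mul]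
      have hcard : l.toFinset.card ≤ A.ncard := by
        rw [Set.ncard_eq_toFinset_card A hA]
        exact Finset.card_le_card hsub
      have : l.length ≤ A.ncard * j :=
        hsum ▸ hle.trans (Nat.mul_le_mul_right j hcard)
      omega
    obtain ⟨a, hal, hcnt⟩ := hex
    have haA : a ∈ A := hmem a hal
    obtain ⟨hpos, hordj⟩ := hord a haA
    obtain ⟨l₂, h1, _h2, h3, h4⟩ := stmt0_extract A hconj a l hmem
    set k := l.count a with hk
    have hlen2 : (List.replicate (k % orderOf a) a ++ l₂).length ≤ n := by
      have hmod : k % orderOf a < orderOf a := Nat.mod_lt _ hpos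
      have : l₂.length + k = l.length := h3
      simp only [List.length_append, List.length_replicate]
      omega
    have hmem2 : ∀ x ∈ List.replicate (k % orderOf a) a ++ l₂, x ∈ A := by
      intro x hx
      rcases List.mem_append.1 hx with hx | hx
      · rw [List.eq_of_mem_replicate hx]; exact haA
      · exact h1 x hx
    obtain ⟨l', p1, p2, p3⟩ := ih (List.replicate (k % orderOf a) a ++ l₂) hlen2 hmem2
    refine ⟨l', p1, p2, ?_⟩
    rw [p3, List.prod_append, List.prod_replicate, pow_mod_orderOf, h4]

/-- If every element of a subgroup `K` of `G` has at most `i`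
conjugates in `G` and `|K| ≤ j`, then the normal closure of `K` in `G` is
finite of `(i, j)`-bounded order. -/
theorem stmt0 :
    ∃ f : ℕ → ℕ → ℕ,
      ∀ (i j : ℕ) (G : Type) [Group G] (K : Subgroup G),
        (∀ x ∈ K, {y : G | IsConj x y}.Finite ∧ {y : G | IsConj x y}.ncard ≤ i) →
        Finite K → Nat.card K ≤ j →
        Finite (Subgroup.normalClosure (K : Set G)) ∧
          Nat.card (Subgroup.normalClosure (K : Set G)) ≤ f i j := by
  classical
  refine ⟨fun i j => (i * j + 1) ^ (i * j * j), ?_⟩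
  intro i j G _ K hclass hKfin hKcard
  set A : Set G := Group.conjugatesOfSet (K : Set G) with hAdef
  -- members of A are conjugates of elements of K
  have hAmem : ∀ a ∈ A, ∃ x ∈ K, IsConj x a := fun a ha =>
    Group.mem_conjugatesOfSet_iff.1 ha
  -- A is conjugation closed
  have hconj : ∀ (g a : G), a ∈ A → g * a * g⁻¹ ∈ A := fun g a ha =>
    Group.conj_mem_conjugatesOfSet ha
  -- order bounds
  have hcardpos : 0 < Nat.card K := Nat.card_pos
  have hord : ∀ a ∈ A, 0 < orderOf a ∧ orderOf a ≤ j := by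
    intro a ha
    obtain ⟨x, hxK, hxa⟩ := hAmem a ha
    obtain ⟨c, hc⟩ := isConj_iff.1 hxa
    have h1 : orderOf a = orderOf x := by
      rw [← hc]
      exact orderOf_injective (MulAut.conj c).toMonoidHom (MulAut.conj c).injective x
    have h2 : orderOf x ∣ Nat.card K := by
      have := orderOf_dvd_natCard (⟨x, hxK⟩ : K)
      rwa [Subgroup.orderOf_mk] at this
    have h3 : 0 < orderOf x := Nat.pos_of_dvd_of_pos h2 hcardpos
    exact ⟨h1 ▸ h3, h1 ▸ (Nat.le_of_dvd hcardpos h2).trans hKcard⟩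
  -- j ≥ 1
  have hj1 : 1 ≤ j := hcardpos.trans_le hKcard
  -- A is finite
  have hKsetfin : (K : Set G).Finite := @Set.toFinite _ _ hKfin
  have hAfin : A.Finite := by
    have : A ⊆ ⋃ x ∈ hKsetfin.toFinset, {y : G | IsConj x y} := by
      intro a ha
      obtain ⟨x, hxK, hxa⟩ := hAmem a ha
      exact Set.mem_biUnion (hKsetfin.mem_toFinset.2 hxK) hxa
    exact (Set.Finite.biUnion (hKsetfin.toFinset.finite_toSet)
      fun x hx => (hclass x (hKsetfin.mem_toFinset.1 hx)).1).subset this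
  -- bound the cardinality of A
  have hAcard : A.ncard ≤ i * j := by
    set cf : G → Finset G := fun x =>
      if h : ({y : G | IsConj x y}).Finite then h.toFinset else ∅ with hcf
    have hsub : A ⊆ ↑(hKsetfin.toFinset.biUnion cf) := by
      intro a ha
      obtain ⟨x, hxK, hxa⟩ := hAmem a ha
      have hxf := (hclass x hxK).1
      simp only [Finset.coe_biUnion, Set.mem_iUnion]
      refine ⟨x, hKsetfin.mem_toFinset.2 hxK, ?_⟩
      simp only [hcf, dif_pos hxf, Finset.mem_coe, Set.Finite.mem_toFinset]
      exact hxa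
    calc A.ncard ≤ (↑(hKsetfin.toFinset.biUnion cf) : Set G).ncard :=
          Set.ncard_le_ncard hsub (Finset.finite_toSet _)
      _ = (hKsetfin.toFinset.biUnion cf).card := Set.ncard_coe_finset _
      _ ≤ ∑ x ∈ hKsetfin.toFinset, (cf x).card := Finset.card_biUnion_le
      _ ≤ ∑ _x ∈ hKsetfin.toFinset, i := by
          refine Finset.sum_le_sum fun x hx => ?_
          have hxK := hKsetfin.mem_toFinset.1 hx
          have hxf := (hclass x hxK).1
          simp only [hcf, dif_pos hxf]
          rw [← Set.ncard_eq_toFinset_card _ hxf]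
          exact (hclass x hxK).2
      _ = hKsetfin.toFinset.card * i := by rw [Finset.sum_const, smul_eq_mul]
      _ ≤ j * i := by
          refine Nat.mul_le_mul_right i ?_
          rw [← Set.ncard_eq_toFinset_card _ hKsetfin, ← Nat.card_coe_set_eq]
          exact hKcard
      _ = i * j := Nat.mul_comm j i
  -- every element of the normal closure is a short product over A
  set μ := i * j * j with hμ
  have hAμ : A.ncard * j ≤ μ := Nat.mul_le_mul_right j hAcard
  have key : ∀ g ∈ Subgroup.normalClosure (K : Set G),
      ∃ l : List G, (∀ x ∈ l, x ∈ A) ∧ l.length ≤ μ ∧ l.prod = g := by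
    intro g hg
    have hg' : g ∈ Submonoid.closure (A ∪ A⁻¹) := by
      rw [← Subgroup.closure_toSubmonoid]
      exact hg
    obtain ⟨l, hlmem, hlprod⟩ := Submonoid.exists_list_of_mem_closure hg'
    have hlA : ∀ x ∈ l, x ∈ A := by
      intro x hx
      rcases hlmem x hx with h | h
      · exact h
      · -- x⁻¹ ∈ A implies x ∈ A
        obtain ⟨y, hyK, hyx⟩ := hAmem x⁻¹ (Set.mem_inv.1 h)
        obtain ⟨c, hc⟩ := isConj_iff.1 hyx
        have : x = c * y⁻¹ * c⁻¹ := by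
          have : x⁻¹ = c * y * c⁻¹ := hc.symm
          rw [← inv_inv x, this]; group
        rw [this]
        exact Group.mem_conjugatesOfSet_iff.2
          ⟨y⁻¹, K.inv_mem hyK, isConj_iff.2 ⟨c, rfl⟩⟩
    obtain ⟨l', h1, h2, h3⟩ :=
      stmt0_shorten A hAfin hconj j hord l.length l le_rfl hlA
    exact ⟨l', h1, h2.trans hAμ, h3.trans hlprod⟩
  -- build the covering map
  set S1 : Set G := insert 1 A with hS1
  have hS1fin : S1.Finite := hAfin.insert 1
  haveI : Finite ↥S1 := hS1fin.to_subtype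
  set φ : (Fin μ → ↥S1) → G := fun f => (List.ofFn fun k => (f k : G)).prod with hφ
  have hcover : (Subgroup.normalClosure (K : Set G) : Set G) ⊆ Set.range φ := by
    intro g hg
    obtain ⟨l, hlA, hlen, hprod⟩ := key g hg
    set l' : List G := l ++ List.replicate (μ - l.length) 1 with hl'
    have hlen' : l'.length = μ := by
      simp only [hl', List.length_append, List.length_replicate]
      omega
    have hl'mem : ∀ x ∈ l', x ∈ S1 := by
      intro x hx
      rcases List.mem_append.1 hx with hx | hx
      · exact Set.mem_insert_of_mem _ (hlA x hx)
      · rw [List.eq_of_mem_replicate hx]; exact Set.mem_insert _ _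
    refine ⟨fun k => ⟨l'.get (Fin.cast hlen'.symm k),
      hl'mem _ (List.get_mem l' _)⟩, ?_⟩
    have hofn : (List.ofFn fun k : Fin μ => l'.get (Fin.cast hlen'.symm k)) = l' := by
      apply List.ext_get
      · simp [hlen']
      · intro n h1 h2
        simp [List.get_ofFn]
    simp only [hφ]
    rw [hofn, hl', List.prod_append, List.prod_replicate, one_pow, mul_one, hprod]
  -- conclude
  have hNfin : (Subgroup.normalClosure (K : Set G) : Set G).Finite :=
    (Set.finite_range φ).subset hcover
  refine ⟨hNfin.to_subtype, ?_⟩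
  have hS1card : S1.ncard ≤ i * j + 1 :=
    (Set.ncard_insert_le 1 A).trans (by omega)
  calc Nat.card (Subgroup.normalClosure (K : Set G))
      = (Subgroup.normalClosure (K : Set G) : Set G).ncard := by
        rw [← Nat.card_coe_set_eq]
        rfl
    _ ≤ (Set.range φ).ncard := Set.ncard_le_ncard hcover (Set.finite_range φ)
    _ ≤ Nat.card (Fin μ → ↥S1) := by
        rw [← Set.image_univ]
        calc (φ '' Set.univ).ncard ≤ (Set.univ : Set (Fin μ → ↥S1)).ncard :=
              Set.ncard_image_le (Set.finite_univ)
          _ = Nat.card (Fin μ → ↥S1) := Set.ncard_univ _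
    _ ≤ (i * j + 1) ^ μ := by
        rw [Nat.card_fun, Nat.card_eq_fintype_card (α := Fin μ), Fintype.card_fin]
        refine Nat.pow_le_pow_left ?_ μ
        rw [Nat.card_coe_set_eq]
        exact hS1card
end

section
/- Let H be a group generated by a set X closed under conjugation by H, and suppose K ≤ H has index m in H. Then for every b ∈ H, the coset Kb contains an element that can be written as a product of at most m−1 elements of X. -/
open QuotientGroup Pointwise

private lemma mk_mul_left {H : Type*} [Group H] {K : Subgroup H} {u v : H}
    (h : (↑u : H ⧸ K) = ↑v) (w : H) : (↑(w * u) : H ⧸ K) = ↑(w * v) := by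
  rw [QuotientGroup.eq] at h ⊢
  simpa [mul_assoc] using h

/-- Left-coset version: every left coset of `K` contains a product of at most
`m - 1` elements of a generating set `Y`. -/
private lemma aux_left {H : Type*} [Group H] (Y : Set H)
    (hgen : Subgroup.closure Y = ⊤) (K : Subgroup H) (m : ℕ)
    (hm : K.index = m) (hm0 : m ≠ 0) (b : H) :
    ∃ l : List H, (∀ x ∈ l, x ∈ Y) ∧ l.length ≤ m - 1 ∧
      ((l.prod : H) : H ⧸ K) = (b : H ⧸ K) := by
  have hcard : Nat.card (H ⧸ K) = m := hm
  haveI : Finite (H ⧸ K) := Nat.finite_of_card_ne_zero (by rw [hcard]; exact hm0)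
  have hm1 : 1 ≤ m := Nat.one_le_iff_ne_zero.mpr hm0
  -- the set of cosets reachable by products of elements of Y
  set S : Set (H ⧸ K) := {c | ∃ l : List H, (∀ x ∈ l, x ∈ Y) ∧ ((l.prod : H) : H ⧸ K) = c}
    with hS
  have hone : ((1 : H) : H ⧸ K) ∈ S := ⟨[], by simp, by simp⟩
  -- S is stable under the action of every element of H
  have key : ∀ h : H, ∀ g : H, ((g : H ⧸ K) ∈ S ↔ ((h * g : H) : H ⧸ K) ∈ S) := by
    have hb' : ∀ h ∈ Subgroup.closure Y, ∀ g : H,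
        ((g : H ⧸ K) ∈ S ↔ ((h * g : H) : H ⧸ K) ∈ S) := by
      intro h hh
      induction hh using Subgroup.closure_induction with
      | mem y hy =>
          intro g
          constructor
          · rintro ⟨l, hlY, hl⟩
            exact ⟨y :: l, by
              intro x hx
              rcases List.mem_cons.mp hx with h1 | h2
              · exact h1 ▸ hy
              · exact hlY x h2, by
              simpa using mk_mul_left hl y⟩
          · intro hyg
            -- finiteness: y • S ⊆ S and injectivity force y • S = S
            have hsub : (y • S : Set (H ⧸ K)) ⊆ S := by
              rintro c ⟨d, hd, rfl⟩
              obtain ⟨g', rfl⟩ := QuotientGroup.mk_surjective d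
              rcases hd with ⟨l, hlY, hl⟩
              refine ⟨y :: l, ?_, ?_⟩
              · intro x hx
                rcases List.mem_cons.mp hx with h1 | h2
                · exact h1 ▸ hy
                · exact hlY x h2
              · rw [List.prod_cons, mk_mul_left hl y]
                exact (MulAction.Quotient.smul_mk K y g').symm
            have hncard : (y • S : Set (H ⧸ K)).ncard = S.ncard := by
              rw [← Set.image_smul]
              exact Set.ncard_image_of_injective S (MulAction.injective y)
            have heq : (y • S : Set (H ⧸ K)) = S :=
              Set.eq_of_subset_of_ncard_le hsub hncard.ge (Set.toFinite S)
            rw [← heq] at hyg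
            rcases hyg with ⟨d, hd, hdeq⟩
            have hdg : d = (g : H ⧸ K) := by
              apply MulAction.injective y
              rw [hdeq]
              exact (MulAction.Quotient.smul_mk K y g).symm
            rwa [hdg] at hd
      | one => intro g; simp
      | mul h1 h2 hh1 hh2 ih1 ih2 =>
          intro g
          rw [ih2 g, mul_assoc]
          exact ih1 (h2 * g)
      | inv h hh ih =>
          intro g
          have := ih (h⁻¹ * g)
          rw [show h * (h⁻¹ * g) = g by group] at this
          exact this.symm
    intro h
    exact hb' h (hgen ▸ Subgroup.mem_top h)
  -- hence b's coset is reachable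
  have hbS : ((b : H) : H ⧸ K) ∈ S := by
    have := (key b 1).mp hone
    simpa using this
  rcases hbS with ⟨l0, hl0Y, hl0⟩
  -- shortening: any reachable coset is reachable in ≤ m - 1 steps
  suffices h : ∀ n : ℕ, ∀ l : List H, l.length ≤ n → (∀ x ∈ l, x ∈ Y) →
      ∃ l' : List H, (∀ x ∈ l', x ∈ Y) ∧ l'.length ≤ m - 1 ∧
        ((l'.prod : H) : H ⧸ K) = ((l.prod : H) : H ⧸ K) by
    obtain ⟨l', h1, h2, h3⟩ := h l0.length l0 le_rfl hl0Y
    exact ⟨l', h1, h2, h3.trans hl0⟩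
  intro n
  induction n with
  | zero =>
      intro l hlen hlY
      exact ⟨l, hlY, by omega, rfl⟩
  | succ n ih =>
      intro l hlen hlY
      by_cases hshort : l.length ≤ m - 1
      · exact ⟨l, hlY, hshort, rfl⟩
      · push_neg at hshort
        have hlm : m ≤ l.length := by omega
        -- pigeonhole on suffixes
        haveI : Fintype (H ⧸ K) := Fintype.ofFinite _
        have hcard' : Fintype.card (H ⧸ K) < Fintype.card (Fin (l.length + 1)) := by
          rw [Fintype.card_fin, ← Nat.card_eq_fintype_card, hcard]
          omega
        obtain ⟨i, j, hne, hij⟩ := Fintype.exists_ne_map_eq_of_card_lt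
          (fun i : Fin (l.length + 1) => (((l.drop i).prod : H) : H ⧸ K)) hcard'
        -- WLOG i < j
        wlog hlt : (i : ℕ) < (j : ℕ) generalizing i j
        · have hne' : (i : ℕ) ≠ (j : ℕ) := fun h => hne (Fin.ext h)
          exact this j i hne.symm hij.symm (by omega)
        · -- delete the segment between positions i and j
          set l' : List H := l.take i ++ l.drop j with hl'
          have hlen' : l'.length ≤ n := by
            have hi : (i : ℕ) ≤ l.length := by omega
            have hj : (j : ℕ) ≤ l.length := by omega
            have : l'.length = min (i : ℕ) l.length + (l.length - j) := by
              simp [hl', List.length_take, List.length_drop]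
            omega
          have hl'Y : ∀ x ∈ l', x ∈ Y := by
            intro x hx
            rcases List.mem_append.mp hx with h1 | h2
            · exact hlY x (List.mem_of_mem_take h1)
            · exact hlY x (List.mem_of_mem_drop h2)
          have hprod : ((l'.prod : H) : H ⧸ K) = ((l.prod : H) : H ⧸ K) := by
            have h1 : l'.prod = (l.take i).prod * (l.drop j).prod := by
              simp [hl']
            have h2 : l.prod = (l.take i).prod * (l.drop i).prod := by
              rw [← List.prod_append, List.take_append_drop]
            rw [h1, h2]
            exact mk_mul_left hij.symm _
          obtain ⟨l'', hY'', hlen'', heq''⟩ := ih l' hlen' hl'Y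
          exact ⟨l'', hY'', hlen'', heq''.trans hprod⟩

/-- If `H` is generated by a conjugation-invariant set `X` and
`K ≤ H` has index `m`, then every coset `K * b` contains an element which is a
product of at most `m - 1` elements of `X`. -/
theorem stmt3 (H : Type*) [Group H] (X : Set H)
    (hgen : Subgroup.closure X = ⊤)
    (hconj : ∀ (h : H), ∀ x ∈ X, h * x * h⁻¹ ∈ X)
    (K : Subgroup H) (m : ℕ) (hm : K.index = m) (hm0 : m ≠ 0) (b : H) :
    ∃ k ∈ K, ∃ l : List H, (∀ x ∈ l, x ∈ X) ∧ l.length ≤ m - 1 ∧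
      l.prod = k * b := by
  obtain ⟨l', hl'X, hl'len, hl'⟩ := aux_left (X⁻¹)
    (by rw [Subgroup.closure_inv]; exact hgen) K m hm hm0 b⁻¹
  refine ⟨l'.prod⁻¹ * b⁻¹, ?_, (l'.map (fun x => x⁻¹)).reverse, ?_, ?_, ?_⟩
  · rw [QuotientGroup.eq] at hl'
    exact hl'
  · intro x hx
    rw [List.mem_reverse, List.mem_map] at hx
    obtain ⟨y, hy, rfl⟩ := hx
    exact Set.mem_inv.mp (hl'X y hy)
  · simpa using hl'len
  · rw [← List.prod_inv_reverse]
    group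
end

section
/- Let G be a group whose center Z(G) has finite index n in G. Then the commutator subgroup [G,G] is finite, with order bounded in terms of n (Schur's theorem). -/
open Subgroup
open scoped commutatorElement

lemma commutator_central_shift {G : Type} [Group G] (a c z w : G)
    (hz : ∀ g : G, g * z = z * g) (hw : ∀ g : G, g * w = w * g) :
    ⁅a * z, c * w⁆ = ⁅a, c⁆ := by
  have hz' : ∀ g : G, g * z⁻¹ = z⁻¹ * g := fun g => (Commute.inv_right (hz g))
  have hw' : ∀ g : G, g * w⁻¹ = w⁻¹ * g := fun g => (Commute.inv_right (hw g))
  simp only [commutatorElement_def, mul_inv_rev, mul_assoc]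
  simp only [← hz, ← hw, ← hz', ← hw', ← mul_assoc]
  rw [mul_assoc (a*c*a⁻¹*c⁻¹*w⁻¹) z⁻¹ w, hw z⁻¹]
  group

lemma commutator_well_defined {G : Type} [Group G] (a b c d : G)
    (h1 : (a : G ⧸ center G) = b) (h2 : (c : G ⧸ center G) = d) :
    ⁅a, c⁆ = ⁅b, d⁆ := by
  rw [QuotientGroup.eq] at h1 h2
  obtain ⟨z, hz, hbz⟩ : ∃ z ∈ center G, b = a * z := ⟨a⁻¹ * b, h1, by group⟩
  obtain ⟨w, hw, hdw⟩ : ∃ w ∈ center G, d = c * w := ⟨c⁻¹ * d, h2, by group⟩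
  subst hbz hdw
  rw [mem_center_iff] at hz hw
  exact (commutator_central_shift a c z w hz hw).symm

lemma commutatorSet_card_le {G : Type} [Group G] [FiniteIndex (center G)] :
    Finite (commutatorSet G) ∧
      Nat.card (commutatorSet G) ≤ (center G).index ^ 2 := by
  have : Finite (G ⧸ center G) :=
    Nat.finite_of_card_ne_zero ((center G).index_eq_card ▸ FiniteIndex.index_ne_zero)
  set f : G ⧸ center G → G ⧸ center G → commutatorSet G :=
    Quotient.lift₂ (fun a b => ⟨⁅a, b⁆, a, b, rfl⟩)
      (fun a c b d h1 h2 => by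
        have h1' : (a : G ⧸ center G) = b := Quotient.sound h1
        have h2' : (c : G ⧸ center G) = d := Quotient.sound h2
        exact Subtype.ext (commutator_well_defined a b c d h1' h2')) with hf
  have hsurj : Function.Surjective (fun p : (G ⧸ center G) × (G ⧸ center G) => f p.1 p.2) := by
    rintro ⟨x, a, b, rfl⟩
    exact ⟨((a : G ⧸ center G), (b : G ⧸ center G)), rfl⟩
  have hfin : Finite (commutatorSet G) := Finite.of_surjective _ hsurj
  refine ⟨hfin, ?_⟩
  calc Nat.card (commutatorSet G) ≤ Nat.card ((G ⧸ center G) × (G ⧸ center G)) :=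
        Nat.card_le_card_of_surjective _ hsurj
    _ = (center G).index ^ 2 := by
        rw [Nat.card_prod, sq, (center G).index_eq_card]

/-- Schur's theorem, quantitative form: if the centre of `G` has
finite index `n`, then the commutator subgroup of `G` is finite, of
`n`-bounded order. -/
theorem stmt4 :
    ∃ f : ℕ → ℕ,
      ∀ (n : ℕ) (G : Type) [Group G],
        (Subgroup.center G).index = n → n ≠ 0 →
        Finite (commutator G) ∧ Nat.card (commutator G) ≤ f n := by
  refine ⟨fun n => n ^ (n ^ 3 + 1), fun n G _ hn hn0 => ?_⟩
  haveI : FiniteIndex (center G) := ⟨hn ▸ hn0⟩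
  obtain ⟨hfin, hcard⟩ := commutatorSet_card_le (G := G)
  haveI := hfin
  haveI hfinc : Finite (commutator G) := inferInstance
  refine ⟨hfinc, ?_⟩
  have hdvd := Subgroup.card_commutator_dvd_index_center_pow (G := G)
  have hpos : 0 < (center G).index ^ ((center G).index * Nat.card (commutatorSet G) + 1) :=
    pow_pos (Nat.pos_of_ne_zero (hn ▸ hn0)) _
  have hle := Nat.le_of_dvd hpos hdvd
  refine hle.trans ?_
  rw [hn]
  refine Nat.pow_le_pow_right (Nat.pos_of_ne_zero hn0) ?_
  have hc : Nat.card (commutatorSet G) ≤ n ^ 2 := hn ▸ hcard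
  calc n * Nat.card (commutatorSet G) + 1 ≤ n * n ^ 2 + 1 :=
        add_le_add_left (Nat.mul_le_mul_left n hc) 1
    _ = n ^ 3 + 1 := by ring
end

section
/- Let G be a residually finite, locally nilpotent group containing an element g with finite centralizer C_G(g). Then G is finite. -/
/-- In a nilpotent group, every nontrivial normal subgroup meets the center nontrivially. -/
lemma aux_normal_meets_center (H : Type*) [Group H] [Group.IsNilpotent H]
    (M : Subgroup H) [hM : M.Normal] (hbot : M ≠ ⊥) :
    ∃ z : H, z ∈ M ∧ z ≠ 1 ∧ z ∈ Subgroup.center H := by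
  obtain ⟨n, hn⟩ := Group.IsNilpotent.nilpotent' (G := H)
  have hP : ∃ n, M ⊓ Subgroup.upperCentralSeries H n ≠ ⊥ := ⟨n, by simpa [hn]⟩
  classical
  let k := Nat.find hP
  have hk : M ⊓ Subgroup.upperCentralSeries H k ≠ ⊥ := Nat.find_spec hP
  have hkpos : k ≠ 0 := by
    intro h0
    apply hk
    rw [h0]
    simp [Subgroup.upperCentralSeries_zero]
  obtain ⟨m, hm⟩ := k.exists_eq_succ_of_ne_zero hkpos
  have hprev : M ⊓ Subgroup.upperCentralSeries H m = ⊥ := by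
    by_contra hne
    have := Nat.find_le (h := hP) hne
    omega
  obtain ⟨⟨z, hz⟩, hz1⟩ := Subgroup.ne_bot_iff_exists_ne_one.mp hk
  obtain ⟨hzM, hzU⟩ := Subgroup.mem_inf.mp hz
  refine ⟨z, hzM, by simpa [Subgroup.mk_eq_one] using hz1, ?_⟩
  rw [Subgroup.mem_center_iff]
  intro y
  have hcomm : z * y * z⁻¹ * y⁻¹ ∈ M ⊓ Subgroup.upperCentralSeries H m := by
    refine Subgroup.mem_inf.mpr ⟨?_, ?_⟩
    · have : z * (y * z⁻¹ * y⁻¹) ∈ M := M.mul_mem hzM (hM.conj_mem _ (M.inv_mem hzM) y)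
      simpa [mul_assoc] using this
    · rw [hm] at hzU
      exact (Subgroup.mem_upperCentralSeries_succ_iff).mp hzU y
  rw [hprev, Subgroup.mem_bot] at hcomm
  have h2 : z * y * z⁻¹ = y := by
    have h := hcomm
    rwa [mul_inv_eq_one] at h
  rw [mul_inv_eq_iff_eq_mul] at h2
  exact h2.symm

/-- From residual finiteness: a normal finite-index subgroup avoiding a finite set of
nontrivial elements. -/
lemma aux_avoid (G : Type*) [Group G]
    (hres : ∀ x : G, x ≠ 1 → ∃ N : Subgroup G, N.Normal ∧ N.index ≠ 0 ∧ x ∉ N) :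
    ∀ T : Finset G, (1 : G) ∉ T →
      ∃ N : Subgroup G, N.Normal ∧ N.index ≠ 0 ∧ ∀ x ∈ T, x ∉ N := by
  classical
  intro T
  induction T using Finset.induction_on with
  | empty =>
    intro _
    exact ⟨⊤, inferInstance, by simp [Subgroup.index_top], by simp⟩
  | @insert a T ha ih =>
    intro h1
    obtain ⟨N, hN, hNi, hNT⟩ := ih (fun h => h1 (Finset.mem_insert_of_mem h))
    obtain ⟨Na, hNa, hNai, hNax⟩ := hres a (fun h => h1 (h ▸ Finset.mem_insert_self a T))
    refine ⟨N ⊓ Na, ?_, Subgroup.index_inf_ne_zero hNi hNai, ?_⟩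
    · exact ⟨fun n hn y => Subgroup.mem_inf.mpr
        ⟨hN.conj_mem n (Subgroup.mem_inf.mp hn).1 y, hNa.conj_mem n (Subgroup.mem_inf.mp hn).2 y⟩⟩
    · intro x hx hxN
      rcases Finset.mem_insert.mp hx with rfl | hxT
      · exact hNax (Subgroup.mem_inf.mp hxN).2
      · exact hNT x hxT (Subgroup.mem_inf.mp hxN).1

/-- Lemma 3.1: a residually finite, locally nilpotent group
containing an element with finite centralizer is finite. -/
theorem stmt12 (G : Type*) [Group G]
    (hres : ∀ x : G, x ≠ 1 → ∃ N : Subgroup G, N.Normal ∧ N.index ≠ 0 ∧ x ∉ N)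
    (hloc : ∀ S : Finset G, Group.IsNilpotent (Subgroup.closure (S : Set G)))
    (g : G) (hg : Finite (Subgroup.centralizer {g})) :
    Finite G := by
  classical
  have hCfin : (Subgroup.centralizer {g} : Set G).Finite := Set.toFinite _
  set T : Finset G := hCfin.toFinset.filter (· ≠ 1) with hT
  have h1T : (1 : G) ∉ T := by simp [hT]
  obtain ⟨N, hN, hNi, hNT⟩ := aux_avoid G hres T h1T
  -- key: N ∩ centralizer {g} = ⊥, i.e. nontrivial elements of the centralizer are not in N
  have hNC : ∀ x : G, x ∈ N → x ∈ Subgroup.centralizer {g} → x = 1 := by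
    intro x hxN hxC
    by_contra hx1
    exact hNT x (by simp [hT, hx1, hxC]) hxN
  -- N is trivial
  have hNbot : N = ⊥ := by
    rw [eq_bot_iff]
    intro x hxN
    rw [Subgroup.mem_bot]
    by_contra hx1
    -- consider the nilpotent group H = ⟨g, x⟩
    set S : Finset G := {g, x} with hS
    set H : Subgroup G := Subgroup.closure (S : Set G) with hH
    haveI : Group.IsNilpotent H := hloc S
    have hgH : g ∈ H := Subgroup.subset_closure (by simp [hS])
    have hxH : x ∈ H := Subgroup.subset_closure (by simp [hS])
    set M : Subgroup H := N.subgroupOf H with hMdef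
    haveI : M.Normal := hN.subgroupOf H
    have hMbot : M ≠ ⊥ := by
      intro hMb
      have : (⟨x, hxH⟩ : H) ∈ M := by
        simp [hMdef, Subgroup.mem_subgroupOf, hxN]
      rw [hMb, Subgroup.mem_bot] at this
      exact hx1 (congrArg Subtype.val this)
    obtain ⟨z, hzM, hz1, hzc⟩ := aux_normal_meets_center H M hMbot
    have hzN : (z : G) ∈ N := hzM
    have hzC : (z : G) ∈ Subgroup.centralizer {g} := by
      rw [Subgroup.mem_centralizer_singleton_iff]
      have := (Subgroup.mem_center_iff.mp hzc) ⟨g, hgH⟩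
      exact congrArg Subtype.val this.symm
    exact hz1 (by ext; exact hNC z hzN hzC)
  rw [hNbot, Subgroup.index_bot] at hNi
  exact Nat.finite_of_card_ne_zero hNi
end

section
/- Let G be a profinite group in which every π-element has centralizer that is either finite or open, and suppose some π-element b has infinite order. Then C_G(b) is open, and every π-element of C_G(b) has open centralizer in G. -/
/-- An element `x` of a topological (profinite) group is a `π`-element if the
order of its image in every finite continuous quotient (i.e. every quotient by
an open normal subgroup) is a `π`-number. -/
def IsProPiElement {G : Type*} [Group G] [TopologicalSpace G] (π : Set ℕ) (x : G) : Prop :=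
  ∀ (N : Subgroup G) [N.Normal], IsOpen (N : Set G) →
    ∀ p : ℕ, p.Prime → p ∣ orderOf (QuotientGroup.mk x : G ⧸ N) → p ∈ π

theorem Subgroup.infinite_centralizer_of_commute {G : Type*} [Group G] {b x : G}
    (hb : ¬ IsOfFinOrder b) (hbx : Commute b x) : Infinite (centralizer {x}) := by
  have hle : zpowers b ≤ centralizer {x} :=
    zpowers_le.2 (mem_centralizer_singleton_iff.2 hbx.eq)
  exact ((infinite_zpowers.2 hb).mono hle).to_subtype

theorem Subgroup.isOpen_centralizer_of_commute {G : Type*} [Group G] [TopologicalSpace G]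
    {b x : G} (hb : ¬ IsOfFinOrder b) (hbx : Commute b x)
    (hx : Finite (centralizer {x}) ∨ IsOpen (centralizer {x} : Set G)) :
    IsOpen (centralizer {x} : Set G) :=
  hx.resolve_left fun hfin => (infinite_centralizer_of_commute hb hbx).not_finite hfin

theorem stmt14_general (G : Type*) [Group G] [TopologicalSpace G]
    (π : Set ℕ)
    (hres : ∀ x : G, IsProPiElement π x →
      Finite (Subgroup.centralizer {x}) ∨ IsOpen ((Subgroup.centralizer {x} : Subgroup G) : Set G))
    (b : G) (hb : IsProPiElement π b) (hbinf : ¬ IsOfFinOrder b) :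
    IsOpen ((Subgroup.centralizer {b} : Subgroup G) : Set G) ∧
      ∀ x : G, IsProPiElement π x → x ∈ Subgroup.centralizer {b} →
        IsOpen ((Subgroup.centralizer {x} : Subgroup G) : Set G) :=
  ⟨Subgroup.isOpen_centralizer_of_commute hbinf (Commute.refl b) (hres b hb),
    fun x hx hxb => Subgroup.isOpen_centralizer_of_commute hbinf
      (Subgroup.mem_centralizer_singleton_iff.1 hxb).symm (hres x hx)⟩

/-- if in a profinite group `G` every `π`-element has finite or
open centralizer, and some `π`-element `b` has infinite order, then `C_G(b)`
is open and every `π`-element of `C_G(b)` has open centralizer in `G`. -/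
theorem stmt14 (G : Type*) [Group G] [TopologicalSpace G] [IsTopologicalGroup G]
    [CompactSpace G] [T2Space G] [TotallyDisconnectedSpace G]
    (π : Set ℕ)
    (hres : ∀ x : G, IsProPiElement π x →
      Finite (Subgroup.centralizer {x}) ∨ IsOpen ((Subgroup.centralizer {x} : Subgroup G) : Set G))
    (b : G) (hb : IsProPiElement π b) (hbinf : ¬ IsOfFinOrder b) :
    IsOpen ((Subgroup.centralizer {b} : Subgroup G) : Set G) ∧
      ∀ x : G, IsProPiElement π x → x ∈ Subgroup.centralizer {b} →
        IsOpen ((Subgroup.centralizer {x} : Subgroup G) : Set G) :=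
  stmt14_general G π hres b hb hbinf
end

section
/- Let G be a profinite group and a ∈ G an element with finitely many conjugates, each conjugate having open centralizer. Then the normal closure ⟨a^G⟩ has finite commutator subgroup. -/
open Subgroup
open scoped commutatorElement

private lemma commAuxL {G : Type*} [Group G] (g h z : G)
    (hz : z ∈ Subgroup.center G) : ⁅g * z, h⁆ = ⁅g, h⁆ := by
  have h1 : z * h * z⁻¹ = h := by
    rw [← Subgroup.mem_center_iff.mp hz h, mul_inv_cancel_right]
  have h2 : ⁅g * z, h⁆ = g * (z * h * z⁻¹) * g⁻¹ * h⁻¹ := by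
    simp only [commutatorElement_def]; group
  rw [h2, h1, ← commutatorElement_def]

private lemma commAuxR {G : Type*} [Group G] (g h w : G)
    (hw : w ∈ Subgroup.center G) : ⁅g, h * w⁆ = ⁅g, h⁆ := by
  have h1 : w * g⁻¹ * w⁻¹ = g⁻¹ := by
    rw [← Subgroup.mem_center_iff.mp hw g⁻¹, mul_inv_cancel_right]
  have h2 : ⁅g, h * w⁆ = g * h * (w * g⁻¹ * w⁻¹) * h⁻¹ := by
    simp only [commutatorElement_def]; group
  rw [h2, h1, ← commutatorElement_def]

private lemma commAux {G : Type*} [Group G] (g h z w : G)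
    (hz : z ∈ Subgroup.center G) (hw : w ∈ Subgroup.center G) :
    ⁅g * z, h * w⁆ = ⁅g, h⁆ := by
  rw [commAuxL _ _ _ hz, commAuxR _ _ _ hw]

private lemma finite_commutatorSet_of_finiteIndex_center (G : Type*) [Group G]
    [(Subgroup.center G).FiniteIndex] : Finite (commutatorSet G) := by
  have : Finite (G ⧸ Subgroup.center G) := inferInstance
  apply Finite.of_surjective
    (f := fun p : (G ⧸ Subgroup.center G) × (G ⧸ Subgroup.center G) =>
      (⟨⁅p.1.out, p.2.out⁆, p.1.out, p.2.out, rfl⟩ : commutatorSet G))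
  rintro ⟨c, g, h, rfl⟩
  refine ⟨(QuotientGroup.mk g, QuotientGroup.mk h), ?_⟩
  obtain ⟨z, hzeq⟩ := QuotientGroup.mk_out_eq_mul (Subgroup.center G) g
  obtain ⟨w, hweq⟩ := QuotientGroup.mk_out_eq_mul (Subgroup.center G) h
  ext
  simp only [hzeq, hweq]
  exact commAux g h z w z.2 w.2

/-- in a profinite group, if `a` has finitely many conjugates
and every conjugate of `a` has open centralizer, then the normal closure
`⟨a^G⟩` has finite commutator subgroup. -/
theorem stmt17 (G : Type*) [Group G] [TopologicalSpace G] [IsTopologicalGroup G]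
    [CompactSpace G] [T2Space G] [TotallyDisconnectedSpace G]
    (a : G) (hfin : {y : G | IsConj a y}.Finite)
    (hopen : ∀ y : G, IsConj a y →
      IsOpen ((Subgroup.centralizer {y} : Subgroup G) : Set G)) :
    Finite (⁅Subgroup.normalClosure {a}, Subgroup.normalClosure {a}⁆ : Subgroup G) := by
  set N := Subgroup.normalClosure ({a} : Set G) with hN
  -- the intersection of the centralizers of the conjugates of `a`
  haveI : Fintype {y : G | IsConj a y} := hfin.fintype
  set D : Subgroup G := ⨅ y : {y : G | IsConj a y}, Subgroup.centralizer {(y : G)} with hD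
  have hDopen : IsOpen (D : Set G) := by
    rw [hD]
    rw [Subgroup.coe_iInf]
    exact isOpen_iInter_of_finite fun y => hopen y y.2
  -- D centralizes N
  have hDC : D ≤ Subgroup.centralizer (N : Set G) := by
    intro x hx
    rw [Subgroup.mem_centralizer_iff]
    intro n hn
    have hle : N ≤ Subgroup.centralizer {x} := by
      rw [hN, Subgroup.normalClosure, Subgroup.closure_le]
      intro y hy
      rw [Group.mem_conjugatesOfSet_iff] at hy
      obtain ⟨b, hb, hby⟩ := hy
      rw [Set.mem_singleton_iff] at hb
      subst hb
      have hx' : x ∈ Subgroup.centralizer {y} := by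
        rw [hD] at hx
        exact (Subgroup.mem_iInf.mp hx) ⟨y, hby⟩
      rw [SetLike.mem_coe, Subgroup.mem_centralizer_iff]
      intro g hg
      rw [Set.mem_singleton_iff] at hg
      subst hg
      exact (Subgroup.mem_centralizer_iff.mp hx' y rfl).symm
    exact (Subgroup.mem_centralizer_iff.mp (hle hn) x rfl).symm
  -- hence the centralizer of N is open, so it has finite index
  have hCopen : IsOpen ((Subgroup.centralizer (N : Set G) : Subgroup G) : Set G) :=
    Subgroup.isOpen_mono hDC hDopen
  haveI : Finite (G ⧸ (Subgroup.centralizer (N : Set G))) :=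
    Subgroup.quotient_finite_of_isOpen _ hCopen
  haveI hCFI : (Subgroup.centralizer (N : Set G)).FiniteIndex :=
    Subgroup.finiteIndex_of_finite_quotient
  -- the center of N contains the centralizer of N intersected with N
  haveI : ((Subgroup.centralizer (N : Set G)).subgroupOf N).FiniteIndex :=
    Subgroup.instFiniteIndex_subgroupOf _ _
  have hle : (Subgroup.centralizer (N : Set G)).subgroupOf N ≤ Subgroup.center N := by
    intro x hx
    rw [Subgroup.mem_center_iff]
    intro g
    have := Subgroup.mem_centralizer_iff.mp (Subgroup.mem_subgroupOf.mp hx) g g.2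
    exact Subtype.ext this
  haveI : (Subgroup.center N).FiniteIndex := Subgroup.finiteIndex_of_le hle
  haveI : Finite (commutatorSet N) := finite_commutatorSet_of_finiteIndex_center N
  haveI : Finite (_root_.commutator N) := inferInstance
  have hmap : (⁅N, N⁆ : Subgroup G) = (_root_.commutator N).map N.subtype := by
    rw [_root_.commutator, Subgroup.map_commutator]
    congr 1 <;> rw [← MonoidHom.range_eq_map, Subgroup.range_subtype]
  rw [hmap]
  have : Finite ((_root_.commutator N).map N.subtype : Set G) := by
    rw [Subgroup.coe_map]
    exact Set.Finite.image _ (Set.toFinite _)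
  exact this
end
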